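/- Let X = {2^n : n ∈ ℕ} ⊆ ℝ and Y = {(2^n, j) : n ∈ ℕ, j ∈ {0,1,…,n}} ⊆ ℝ², each with the metric inherited from the Euclidean metric. Then the maps f : X → Y and g : Y → X defined by f(2^n) = (2^n, 0) and g(2^n, j) = 2^n are coarse Lipschitz, g∘f ∼_∞ Id_X and f∘g ∼_∞ Id_Y; hence X and Y are asymptotically coarse Lipschitz equivalent. -/

import Mathlib

/-- A map between (pseudo)metric spaces is coarse Lipschitz if there is `L > 0` with
`∂(f x, f x') ≤ L · d(x, x') + L` for all `x, x'`. -/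
def CoarseLipschitz {X Y : Type*} [PseudoMetricSpace X] [PseudoMetricSpace Y]
    (f : X → Y) : Prop :=
  ∃ L > (0 : ℝ), ∀ x x' : X, dist (f x) (f x') ≤ L * dist x x' + L

/-- Maps `f g : X → Y` are asymptotically close, `f ∼_∞ g`, if either `X` is bounded, or
for some basepoint `x0`: for every `ε > 0` there is `R > 0` such that
`∂(f x, g x) ≤ ε · d(x, x0)` whenever `d(x, x0) ≥ R`. -/
def AsympClose {X Y : Type*} [PseudoMetricSpace X] [PseudoMetricSpace Y]
    (f g : X → Y) : Prop :=
  Bornology.IsBounded (Set.univ : Set X) ∨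
    ∃ x0 : X, ∀ ε > (0 : ℝ), ∃ R > (0 : ℝ), ∀ x : X,
      R ≤ dist x x0 → dist (f x) (g x) ≤ ε * dist x x0

/-- `f : X → Y` is an asymptotic coarse Lipschitz equivalence with asymptotic coarse
Lipschitz inverse `g : Y → X` if `f` and `g` are coarse Lipschitz, `g ∘ f ∼_∞ Id_X` and
`f ∘ g ∼_∞ Id_Y`. -/
def AsympCLInverse {X Y : Type*} [PseudoMetricSpace X] [PseudoMetricSpace Y]
    (f : X → Y) (g : Y → X) : Prop :=
  CoarseLipschitz f ∧ CoarseLipschitz g ∧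
    AsympClose (g ∘ f) id ∧ AsympClose (f ∘ g) id

/-- `f` is an asymptotic coarse Lipschitz equivalence if it admits an asymptotic coarse
Lipschitz inverse. -/
def IsAsympCLEquiv {X Y : Type*} [PseudoMetricSpace X] [PseudoMetricSpace Y]
    (f : X → Y) : Prop :=
  ∃ g : Y → X, AsympCLInverse f g

/-- Metric spaces `X` and `Y` are asymptotically coarse Lipschitz equivalent. -/
def AsympCLEquivalent (X Y : Type*) [PseudoMetricSpace X] [PseudoMetricSpace Y] : Prop :=
  ∃ f : X → Y, IsAsympCLEquiv f

/-- The subset `X = {2^n : n ∈ ℕ}` of `ℝ`. -/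
def PowersOfTwo : Set ℝ := {x : ℝ | ∃ n : ℕ, x = 2 ^ n}

/-- The subset `Y = {(2^n, j) : n ∈ ℕ, 0 ≤ j ≤ n}` of the Euclidean plane. -/
def PowersOfTwoColumns : Set (EuclideanSpace ℝ (Fin 2)) :=
  {p | ∃ n j : ℕ, j ≤ n ∧ p = ![(2 : ℝ) ^ n, (j : ℝ)]}

/-! `f` is an isometric embedding and `g` a `1`-Lipschitz coordinate projection with
`g ∘ f = id`. The point `(2^n, j)` is moved by `f ∘ g` a distance `j ≤ n`, while it lies at
distance about `2^n` from the basepoint: the displacement is logarithmic, hence sublinear, in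
the distance to the basepoint. -/

open Real Filter Asymptotics
open scoped NNReal

local notation "ℝ²" => EuclideanSpace ℝ (Fin 2)

section AsymptoticGeometry

variable {X Y : Type*} [PseudoMetricSpace X] [PseudoMetricSpace Y]

theorem LipschitzWith.coarseLipschitz {K : ℝ≥0} {f : X → Y} (hf : LipschitzWith K f) :
    CoarseLipschitz f := by
  refine ⟨K + 1, by positivity, fun x x' => ?_⟩
  calc dist (f x) (f x') ≤ K * dist x x' := hf.dist_le_mul x x'
    _ ≤ (K + 1) * dist x x' + (K + 1) := by nlinarith [dist_nonneg (x := x) (y := x'), K.2]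

theorem AsympClose.of_dist_le_sublinear {f g : X → Y} {φ : ℝ → ℝ} (hφ : φ =o[atTop] id)
    (x0 : X) (h : ∀ x, dist (f x) (g x) ≤ φ (dist x x0)) : AsympClose f g := by
  refine Or.inr ⟨x0, fun ε hε => ?_⟩
  obtain ⟨T, hT⟩ := eventually_atTop.mp (hφ.def hε)
  refine ⟨max T 1, by positivity, fun x hx => ?_⟩
  have hd : T ≤ dist x x0 := (le_max_left T 1).trans hx
  calc dist (f x) (g x) ≤ φ (dist x x0) := h x
    _ ≤ ‖φ (dist x x0)‖ := le_abs_self _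
    _ ≤ ε * ‖dist x x0‖ := hT _ hd
    _ = ε * dist x x0 := by rw [norm_of_nonneg dist_nonneg]

theorem AsympClose.refl (f : X → Y) : AsympClose f f := by
  rcases isEmpty_or_nonempty X with hX | ⟨⟨x0⟩⟩
  · exact Or.inl (by simp [Set.univ_eq_empty_iff.mpr hX])
  · exact .of_dist_le_sublinear (isLittleO_zero id atTop) x0 fun x => by simp

end AsymptoticGeometry

theorem EuclideanSpace.dist_eq_dist_apply_of_forall_ne {𝕜 ι : Type*} [RCLike 𝕜] [Fintype ι]
    {p q : EuclideanSpace 𝕜 ι} (i : ι) (h : ∀ j ≠ i, p j = q j) :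
    dist p q = dist (p i) (q i) := by
  rw [EuclideanSpace.dist_eq, Finset.sum_eq_single i (fun j _ hj => by simp [h j hj]) (by simp),
    sqrt_sq dist_nonneg]

theorem EuclideanSpace.apply_le_dist_add_apply {ι : Type*} [Fintype ι]
    (p q : EuclideanSpace ℝ ι) (i : ι) : p i ≤ dist p q + q i := by
  linarith [le_abs_self (p i - q i), (Real.dist_eq (p i) (q i)).symm.trans_le
    (PiLp.dist_apply_le p q i)]

theorem Real.isLittleO_logb_add_const_atTop (b c : ℝ) :
    (fun t => logb b (t + c)) =o[atTop] id := by
  have hshift : (fun t : ℝ => t + c) =O[atTop] id :=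
    (isBigO_refl id atTop).add (isLittleO_const_id_atTop c).isBigO
  exact (isLittleO_logb_id_atTop.comp_tendsto
    (tendsto_atTop_add_const_right _ c tendsto_id)).trans_isBigO hshift

namespace PowersOfTwoColumns

theorem apply_zero_pos {q : ℝ²} (hq : q ∈ PowersOfTwoColumns) : 0 < q 0 := by
  obtain ⟨n, j, -, hq⟩ := hq
  simp [hq]

theorem abs_apply_one_le_logb_apply_zero {q : ℝ²}
    (hq : q ∈ PowersOfTwoColumns) : |q 1| ≤ logb 2 (q 0) := by
  obtain ⟨n, j, hjn, hq⟩ := hq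
  simp only [Fin.isValue, hq, Matrix.cons_val_zero, Matrix.cons_val_one, Matrix.cons_val_fin_one,
    Nat.abs_cast, logb_pow, logb_self_eq_one one_lt_two, mul_one]
  exact_mod_cast hjn

end PowersOfTwoColumns

/-- The maps `f : X → Y`, `f(2^n) = (2^n, 0)`, and `g : Y → X`,
`g(2^n, j) = 2^n`, are coarse Lipschitz with `g ∘ f ∼_∞ Id_X` and `f ∘ g ∼_∞ Id_Y`; hence
`X` and `Y` are asymptotically coarse Lipschitz equivalent. -/
theorem powersOfTwo_asympCLEquiv
    (f : PowersOfTwo → PowersOfTwoColumns) (g : PowersOfTwoColumns → PowersOfTwo)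
    (hf : ∀ p : PowersOfTwo,
      (f p : EuclideanSpace ℝ (Fin 2)) = ![(p : ℝ), (0 : ℝ)])
    (hg : ∀ q : PowersOfTwoColumns,
      (g q : ℝ) = (q : EuclideanSpace ℝ (Fin 2)) 0) :
    CoarseLipschitz f ∧ CoarseLipschitz g ∧
      AsympClose (g ∘ f) id ∧ AsympClose (f ∘ g) id ∧
      AsympCLEquivalent PowersOfTwo PowersOfTwoColumns := by
  have hf0 (p : PowersOfTwo) : (f p : ℝ²) 0 = p := by simp [hf]
  have hf1 (p : PowersOfTwo) : (f p : ℝ²) 1 = 0 := by simp [hf]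
  have hf_iso : Isometry f := .of_dist_eq fun p p' => by
    rw [Subtype.dist_eq, Subtype.dist_eq, ← hf0, ← hf0,
      EuclideanSpace.dist_eq_dist_apply_of_forall_ne 0 (by simp [Fin.forall_fin_two, hf1])]
  have hg_lip : LipschitzWith 1 g := .of_dist_le_mul fun q q' => by
    rw [Subtype.dist_eq, Subtype.dist_eq, hg, hg, NNReal.coe_one, one_mul]
    exact PiLp.dist_apply_le _ _ 0
  have hgf : g ∘ f = id := funext fun p => Subtype.ext (by simp [hg, hf0])
  let x0 : PowersOfTwo := ⟨1, 0, (pow_zero 2).symm⟩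
  have hfg (q : PowersOfTwoColumns) : dist (f (g q)) q ≤ logb 2 (dist q (f x0) + 1) := by
    have hq0 : (q : ℝ²) 0 ≤ dist q (f x0) + 1 := by
      simpa [Subtype.dist_eq, hf0, x0] using
        EuclideanSpace.apply_le_dist_add_apply (q : ℝ²) (f x0) 0
    calc dist (f (g q)) q = |(q : ℝ²) 1| := by
          rw [Subtype.dist_eq, EuclideanSpace.dist_eq_dist_apply_of_forall_ne 1
            (by simp [Fin.forall_fin_two, hf0, hg]), hf1, dist_zero_left, Real.norm_eq_abs]
      _ ≤ logb 2 ((q : ℝ²) 0) := PowersOfTwoColumns.abs_apply_one_le_logb_apply_zero q.2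
      _ ≤ logb 2 (dist q (f x0) + 1) :=
          logb_le_logb_of_le one_lt_two (PowersOfTwoColumns.apply_zero_pos q.2) hq0
  have hCLf := hf_iso.lipschitz.coarseLipschitz
  have hCLg := hg_lip.coarseLipschitz
  have hAgf : AsympClose (g ∘ f) id := hgf ▸ .refl _
  have hAfg : AsympClose (f ∘ g) id :=
    .of_dist_le_sublinear (isLittleO_logb_add_const_atTop 2 1) (f x0) hfg
  exact ⟨hCLf, hCLg, hAgf, hAfg, f, g, hCLf, hCLg, hAgf, hAfg⟩
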